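/- Let ω ∈ D(ν,τ) and let a: ℝ^ℓ → (0,∞) be ℤ^ℓ-periodic and given by log a(θ) = Σ_{k∈ℤ^ℓ} c_k e^{2πi k·θ}, an absolutely convergent Fourier series with real-valued sum, whose coefficients satisfy |c_k| ≤ M e^{−δ|k|} for some M > 0, δ > 0. Set λ = c_0 (the average of log a over T^ℓ) and ν = e^λ. Then there exists a continuous, positive, ℤ^ℓ-periodic function C: ℝ^ℓ → (0,∞) such that a(θ) = ν C(θ)/C(θ + ω) for every θ ∈ ℝ^ℓ. -/

import Mathlib

/-!
Taking logarithms turns `a(θ) = e^{c₀} C(θ)/C(θ+ω)` into the additive cohomological equation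
`u(θ) - u(θ+ω) = log a(θ) - c₀`, solved coefficientwise by `u_k = c_k / (1 - e^{2πi k·ω})`.
The Diophantine condition bounds the small divisors below by `4 / (ν |k|^τ)`, a polynomial loss
absorbed by the exponential decay of `c_k`; so `u` is an absolutely convergent Fourier series,
hence continuous and periodic. Since `log a` is real, `Im u` increases by `Im c₀` along every
`ω`-orbit, and being bounded it forces `Im c₀ = 0`. Then `C = exp (Re u)`.
-/

open Real FourierTransform

theorem Real.fourierChar_intCast (n : ℤ) : 𝐞 n = 1 := by
  rw [fourierChar_apply', Circle.exp_two_pi_mul_int]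

theorem Real.four_mul_abs_sub_round_le_norm_one_sub_fourierChar (x : ℝ) :
    4 * |x - round x| ≤ ‖1 - (𝐞 x : ℂ)‖ := by
  set y := x - round x
  have hy : |y| ≤ 1 / 2 := abs_sub_round x
  have hx : 𝐞 x = 𝐞 y := by
    rw [← sub_add_cancel x (round x), AddChar.map_add_eq_mul, fourierChar_intCast, mul_one]
  have hsin : 2 / π * |π * y| ≤ |sin (π * y)| :=
    mul_abs_le_abs_sin (by rw [abs_mul, abs_of_pos pi_pos]; nlinarith [pi_pos])
  rw [hx, norm_sub_rev, fourierChar_apply, mul_comm _ Complex.I,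
    Complex.norm_exp_I_mul_ofReal_sub_one, norm_mul, Real.norm_eq_abs, Real.norm_eq_abs, abs_two,
    show 2 * π * y / 2 = π * y by ring]
  rw [abs_mul, abs_of_pos pi_pos, ← mul_assoc, div_mul_cancel₀ _ pi_pos.ne'] at hsin
  linarith

theorem summable_pi_prod_of_nonneg {ι : Type*} [Fintype ι] {β : ι → Type*}
    {f : ∀ i, β i → ℝ} (hf₀ : ∀ i b, 0 ≤ f i b) (hf : ∀ i, Summable (f i)) :
    Summable fun k : (∀ i, β i) => ∏ i, f i (k i) := by
  classical
  refine summable_of_sum_le (c := ∏ i, ∑' b, f i b)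
    (fun k => Finset.prod_nonneg fun i _ => hf₀ i _) fun s => ?_
  calc ∑ k ∈ s, ∏ i, f i (k i)
      ≤ ∑ k ∈ Fintype.piFinset fun i => s.image (· i), ∏ i, f i (k i) :=
        Finset.sum_le_sum_of_subset_of_nonneg
          (fun k hk => Fintype.mem_piFinset.2 fun i => Finset.mem_image_of_mem _ hk)
          fun k _ _ => Finset.prod_nonneg fun i _ => hf₀ i _
    _ = ∏ i, ∑ b ∈ s.image (· i), f i b := (Finset.prod_univ_sum _ _).symm
    _ ≤ ∏ i, ∑' b, f i b :=
        Finset.prod_le_prod (fun i _ => Finset.sum_nonneg fun b _ => hf₀ i b)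
          fun i _ => (hf i).sum_le_tsum _ fun b _ => hf₀ i b

theorem summable_exp_neg_mul_abs_int {ε : ℝ} (hε : 0 < ε) :
    Summable fun n : ℤ => exp (-ε * |(n : ℝ)|) := by
  have h : Summable fun n : ℕ => exp (-ε * n) := by
    simpa [← Real.exp_nat_mul, mul_comm] using summable_geometric_of_lt_one (exp_pos (-ε)).le
      (exp_lt_one_iff.2 (neg_neg_of_pos hε))
  exact .of_nat_of_neg (by simpa using h) (by simpa using h)

theorem summable_exp_neg_mul_sum_abs {ι : Type*} [Fintype ι] {ε : ℝ} (hε : 0 < ε) :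
    Summable fun k : ι → ℤ => exp (-ε * ∑ i, |(k i : ℝ)|) := by
  refine (summable_pi_prod_of_nonneg (fun _ _ => (exp_pos _).le)
    fun (_ : ι) => summable_exp_neg_mul_abs_int hε).congr fun k => ?_
  rw [Finset.mul_sum, Real.exp_sum]

theorem rpow_le_factorial_div_pow_mul_exp {τ ε t : ℝ} (hε : 0 < ε) (ht : 1 ≤ t) :
    t ^ τ ≤ (⌈τ⌉₊).factorial / ε ^ ⌈τ⌉₊ * exp (ε * t) := by
  set m := ⌈τ⌉₊
  calc t ^ τ ≤ t ^ (m : ℝ) := rpow_le_rpow_of_exponent_le ht (Nat.le_ceil τ)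
    _ = (ε * t) ^ m / ε ^ m := by
        rw [rpow_natCast, mul_pow, mul_div_cancel_left₀ _ (pow_pos hε m).ne']
    _ ≤ m.factorial * exp (ε * t) / ε ^ m := by
        gcongr
        exact (div_le_iff₀' (by positivity)).1 (Real.pow_div_factorial_le_exp _ (by positivity) m)
    _ = _ := by ring

variable {ι : Type*} [Fintype ι]

noncomputable def torusChar (k : ι → ℤ) (θ : ι → ℝ) : ℂ := 𝐞 (∑ i, (k i : ℝ) * θ i)

theorem torusChar_eq_exp (k : ι → ℤ) (θ : ι → ℝ) :
    torusChar k θ = Complex.exp (((2 * π : ℝ) : ℂ) * Complex.I *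
      ((∑ i, (k i : ℝ) * θ i : ℝ) : ℂ)) := by
  rw [torusChar, fourierChar_apply]
  push_cast
  ring_nf

@[simp]
theorem norm_torusChar (k : ι → ℤ) (θ : ι → ℝ) : ‖torusChar k θ‖ = 1 := Circle.norm_coe _

@[simp]
theorem torusChar_zero_left (θ : ι → ℝ) : torusChar 0 θ = 1 := by simp [torusChar]

theorem torusChar_add (k : ι → ℤ) (θ η : ι → ℝ) :
    torusChar k (θ + η) = torusChar k θ * torusChar k η := by
  simp only [torusChar, Pi.add_apply, mul_add, Finset.sum_add_distrib,
    AddChar.map_add_eq_mul, Circle.coe_mul]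

theorem torusChar_add_intCast (k : ι → ℤ) (θ : ι → ℝ) (e : ι → ℤ) :
    torusChar k (θ + fun i => (e i : ℝ)) = torusChar k θ := by
  have h : ∑ i, (k i : ℝ) * e i = ((∑ i, k i * e i : ℤ) : ℝ) := by push_cast; rfl
  rw [torusChar_add, torusChar, torusChar, h, fourierChar_intCast, Circle.coe_one, mul_one]

theorem continuous_torusChar (k : ι → ℤ) : Continuous (torusChar k) := by
  unfold torusChar; fun_prop

noncomputable def fourierSum (d : (ι → ℤ) → ℂ) (θ : ι → ℝ) : ℂ := ∑' k, d k * torusChar k θ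

theorem fourierSum_add_intCast (d : (ι → ℤ) → ℂ) (θ : ι → ℝ) (e : ι → ℤ) :
    fourierSum d (θ + fun i => (e i : ℝ)) = fourierSum d θ := by
  simp only [fourierSum, torusChar_add_intCast]

theorem hasSum_fourierSum {d : (ι → ℤ) → ℂ} (hd : Summable fun k => ‖d k‖) (θ : ι → ℝ) :
    HasSum (fun k => d k * torusChar k θ) (fourierSum d θ) :=
  (Summable.of_norm (by simpa using hd)).hasSum

theorem continuous_fourierSum {d : (ι → ℤ) → ℂ} (hd : Summable fun k => ‖d k‖) :
    Continuous (fourierSum d) :=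
  continuous_tsum (fun k => continuous_const.mul (continuous_torusChar k)) hd fun k θ => by simp

theorem norm_fourierSum_le {d : (ι → ℤ) → ℂ} (hd : Summable fun k => ‖d k‖) (θ : ι → ℝ) :
    ‖fourierSum d θ‖ ≤ ∑' k, ‖d k‖ :=
  (norm_tsum_le_tsum_norm (by simpa using hd)).trans_eq (by simp)

/-- For `k = 0` the divisor vanishes, and the junk value `c 0 / 0 = 0` is the coefficient wanted. -/
theorem fourierSum_sub_fourierSum_add {c : (ι → ℤ) → ℂ} {ω θ : ι → ℝ} {s : ℂ}
    (hres : ∀ k, k ≠ 0 → 1 - torusChar k ω ≠ 0)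
    (hd : Summable fun k => ‖c k / (1 - torusChar k ω)‖)
    (hs : HasSum (fun k => c k * torusChar k θ) s) :
    fourierSum (fun k => c k / (1 - torusChar k ω)) θ -
      fourierSum (fun k => c k / (1 - torusChar k ω)) (θ + ω) = s - c 0 := by
  classical
  refine ((hasSum_fourierSum hd θ).sub (hasSum_fourierSum hd (θ + ω))).unique ?_
  convert hs.sub (hasSum_ite_eq 0 (c 0)) using 1
  funext k
  rw [torusChar_add]
  rcases eq_or_ne k 0 with rfl | hk
  · simp
  · have := hres k hk
    rw [if_neg hk, sub_zero]
    field_simp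

theorem one_le_sum_abs_of_ne_zero {k : ι → ℤ} (hk : k ≠ 0) : 1 ≤ ∑ i, |(k i : ℝ)| := by
  obtain ⟨i, hi⟩ := Function.ne_iff.1 hk
  calc (1 : ℝ) ≤ |(k i : ℝ)| := by exact_mod_cast Int.one_le_abs hi
    _ ≤ ∑ j, |(k j : ℝ)| :=
        Finset.single_le_sum (fun j _ => abs_nonneg (k j : ℝ)) (Finset.mem_univ i)

def IsDiophantine (ν τ : ℝ) (ω : ι → ℝ) : Prop :=
  ∀ k : ι → ℤ, k ≠ 0 → ∀ n : ℤ,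
    (ν * (∑ i, |(k i : ℝ)|) ^ τ)⁻¹ ≤ |(∑ i, (k i : ℝ) * ω i) - (n : ℝ)|

namespace IsDiophantine

variable {ν τ : ℝ} {ω : ι → ℝ}

theorem le_norm_one_sub_torusChar (hω : IsDiophantine ν τ ω) {k : ι → ℤ} (hk : k ≠ 0) :
    4 * (ν * (∑ i, |(k i : ℝ)|) ^ τ)⁻¹ ≤ ‖1 - torusChar k ω‖ :=
  (mul_le_mul_of_nonneg_left (hω k hk _) (by norm_num)).trans
    (four_mul_abs_sub_round_le_norm_one_sub_fourierChar _)

theorem one_sub_torusChar_ne_zero (hν : 0 < ν) (hω : IsDiophantine ν τ ω) {k : ι → ℤ}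
    (hk : k ≠ 0) : 1 - torusChar k ω ≠ 0 := by
  have := rpow_pos_of_pos (zero_lt_one.trans_le (one_le_sum_abs_of_ne_zero hk)) τ
  exact norm_pos_iff.1 ((by positivity : (0 : ℝ) < 4 * (ν * _)⁻¹).trans_le
    (hω.le_norm_one_sub_torusChar hk))

theorem norm_div_one_sub_torusChar_le (hν : 0 < ν) (hω : IsDiophantine ν τ ω) {k : ι → ℤ}
    (hk : k ≠ 0) (z : ℂ) :
    ‖z / (1 - torusChar k ω)‖ ≤ ν / 4 * (∑ i, |(k i : ℝ)|) ^ τ * ‖z‖ := by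
  have := rpow_pos_of_pos (zero_lt_one.trans_le (one_le_sum_abs_of_ne_zero hk)) τ
  rw [norm_div, div_le_iff₀ (norm_pos_iff.2 (hω.one_sub_torusChar_ne_zero hν hk))]
  calc ‖z‖ = ν / 4 * (∑ i, |(k i : ℝ)|) ^ τ * ‖z‖ *
        (4 * (ν * (∑ i, |(k i : ℝ)|) ^ τ)⁻¹) := by field_simp
    _ ≤ _ := by gcongr; exact hω.le_norm_one_sub_torusChar hk

theorem summable_norm_div_one_sub_torusChar (hν : 0 < ν) (hω : IsDiophantine ν τ ω)
    {c : (ι → ℤ) → ℂ} {M δ : ℝ} (hδ : 0 < δ)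
    (hc : ∀ k, ‖c k‖ ≤ M * exp (-δ * ∑ i, |(k i : ℝ)|)) :
    Summable fun k => ‖c k / (1 - torusChar k ω)‖ := by
  set K := (⌈τ⌉₊).factorial / (δ / 2) ^ ⌈τ⌉₊
  refine Summable.of_norm_bounded_eventually
    ((summable_exp_neg_mul_sum_abs (half_pos hδ)).mul_left (ν / 4 * K * M)) ?_
  filter_upwards [(Set.finite_singleton (0 : ι → ℤ)).compl_mem_cofinite] with k hk
  set t := ∑ i, |(k i : ℝ)|
  have hpow : t ^ τ ≤ K * exp (δ / 2 * t) :=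
    rpow_le_factorial_div_pow_mul_exp (half_pos hδ) (one_le_sum_abs_of_ne_zero hk)
  calc ‖‖c k / (1 - torusChar k ω)‖‖ ≤ ν / 4 * t ^ τ * ‖c k‖ := by
        rw [norm_norm]; exact hω.norm_div_one_sub_torusChar_le hν hk _
    _ ≤ ν / 4 * (K * exp (δ / 2 * t)) * (M * exp (-δ * t)) := by
        gcongr
        exact hc k
    _ = ν / 4 * K * M * exp (-(δ / 2) * t) := by
        rw [show -(δ / 2) * t = δ / 2 * t + -δ * t by ring, exp_add]; ring

end IsDiophantine

theorem eq_zero_of_map_eq_add_of_abs_le {α : Type*} [Nonempty α] {f : α → ℝ} {g : α → α}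
    {c B : ℝ} (hB : ∀ x, |f x| ≤ B) (hg : ∀ x, f (g x) = f x + c) : c = 0 := by
  obtain ⟨x⟩ := ‹Nonempty α›
  have hiter : ∀ n : ℕ, f (g^[n] x) = f x + n * c := by
    intro n
    induction n with
    | zero => simp
    | succ n ih => rw [Function.iterate_succ_apply', hg, ih]; push_cast; ring
  have hbound : ∀ n : ℕ, n * |c| ≤ 2 * B := fun n => calc
    n * |c| = |f (g^[n] x) - f x| := by rw [hiter, add_sub_cancel_left, abs_mul, Nat.abs_cast]
    _ ≤ |f (g^[n] x)| + |f x| := abs_sub _ _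
    _ ≤ 2 * B := by linarith [hB (g^[n] x), hB x]
  by_contra hc
  obtain ⟨n, hn⟩ := exists_nat_gt (2 * B / |c|)
  rw [div_lt_iff₀ (abs_pos.2 hc)] at hn
  linarith [hbound n]

theorem ofReal_eq_exp_mul_exp_re_div_exp_re {a : ℝ} (ha : 0 < a) {z u v : ℂ} (hz : z.im = 0)
    (h : u - v = Real.log a - z) :
    (a : ℂ) = Complex.exp z * (Real.exp u.re : ℂ) / (Real.exp v.re : ℂ) := by
  have hre : u.re - v.re = Real.log a - z.re := by simpa using congrArg Complex.re h
  rw [← Complex.re_add_im z, hz, Complex.ofReal_zero, zero_mul, add_zero, ← Complex.ofReal_exp]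
  norm_cast
  rw [← exp_add, ← exp_sub, show z.re + u.re - v.re = Real.log a by linarith, exp_log ha]

theorem stmt6_general (ℓ : ℕ) (ν τ M δ : ℝ) (hν : 0 < ν) (hδ : 0 < δ)
    (ω : Fin ℓ → ℝ)
    (hdio : ∀ k : Fin ℓ → ℤ, k ≠ 0 → ∀ n : ℤ,
      (ν * (∑ i, |(k i : ℝ)|) ^ τ)⁻¹ ≤ |(∑ i, (k i : ℝ) * ω i) - (n : ℝ)|)
    (a : (Fin ℓ → ℝ) → ℝ) (hapos : ∀ θ, 0 < a θ)
    (c : (Fin ℓ → ℤ) → ℂ)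
    (hdecay : ∀ k : Fin ℓ → ℤ,
      ‖c k‖ ≤ M * Real.exp (-δ * (∑ i, |(k i : ℝ)|)))
    (hsum : ∀ θ : Fin ℓ → ℝ, HasSum (fun k : Fin ℓ → ℤ =>
      c k * Complex.exp (((2 * Real.pi : ℝ) : ℂ) * Complex.I *
        ((∑ i, (k i : ℝ) * θ i : ℝ) : ℂ))) ((Real.log (a θ) : ℂ))) :
    ∃ C : (Fin ℓ → ℝ) → ℝ,
      Continuous C ∧ (∀ θ, 0 < C θ) ∧
      (∀ (θ : Fin ℓ → ℝ) (e : Fin ℓ → ℤ), C (θ + fun i => (e i : ℝ)) = C θ) ∧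
      (∀ θ, (a θ : ℂ) = Complex.exp (c 0) * (C θ : ℂ) / (C (θ + ω) : ℂ)) := by
  set U := fourierSum fun k => c k / (1 - torusChar k ω)
  have hd := IsDiophantine.summable_norm_div_one_sub_torusChar hν hdio hδ hdecay
  have hcoh : ∀ θ, U θ - U (θ + ω) = Real.log (a θ) - c 0 := fun θ =>
    fourierSum_sub_fourierSum_add (fun _ hk => IsDiophantine.one_sub_torusChar_ne_zero hν hdio hk)
      hd (by simpa only [torusChar_eq_exp] using hsum θ)
  have him : (c 0).im = 0 := by
    refine eq_zero_of_map_eq_add_of_abs_le (f := fun θ => (U θ).im) (g := (· + ω))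
      (fun θ => (Complex.abs_im_le_norm _).trans (norm_fourierSum_le hd θ))
      fun θ => ?_
    have := congrArg Complex.im (hcoh θ)
    simp only [Complex.sub_im, Complex.ofReal_im] at this
    linarith
  have hU := continuous_fourierSum hd
  exact ⟨fun θ => Real.exp (U θ).re, by fun_prop, fun θ => exp_pos _,
    fun θ e => by simp only [U, fourierSum_add_intCast],
    fun θ => ofReal_eq_exp_mul_exp_re_div_exp_re (hapos θ) him (hcoh θ)⟩

/-- Let `ω` be Diophantine of class `D(ν,τ)` and let
`a : ℝ^ℓ → (0,∞)` be `ℤ^ℓ`-periodic with `log a` given by an absolutely convergent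
Fourier series `log a(θ) = Σ_k c_k e^{2πi k·θ}` (real-valued sum) whose coefficients
decay exponentially.  With `λ = c₀` and multiplier `e^λ`, there is a continuous,
positive, `ℤ^ℓ`-periodic function `C` with `a(θ) = e^λ C(θ)/C(θ+ω)` for all `θ`. -/
theorem stmt6 (ℓ : ℕ) (ν τ M δ : ℝ) (hν : 0 < ν) (hM : 0 < M) (hδ : 0 < δ)
    (ω : Fin ℓ → ℝ)
    (hdio : ∀ k : Fin ℓ → ℤ, k ≠ 0 → ∀ n : ℤ,
      (ν * (∑ i, |(k i : ℝ)|) ^ τ)⁻¹ ≤ |(∑ i, (k i : ℝ) * ω i) - (n : ℝ)|)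
    (a : (Fin ℓ → ℝ) → ℝ) (hapos : ∀ θ, 0 < a θ)
    (haper : ∀ (θ : Fin ℓ → ℝ) (e : Fin ℓ → ℤ), a (θ + fun i => (e i : ℝ)) = a θ)
    (c : (Fin ℓ → ℤ) → ℂ)
    (hdecay : ∀ k : Fin ℓ → ℤ,
      ‖c k‖ ≤ M * Real.exp (-δ * (∑ i, |(k i : ℝ)|)))
    (hsum : ∀ θ : Fin ℓ → ℝ, HasSum (fun k : Fin ℓ → ℤ =>
      c k * Complex.exp (((2 * Real.pi : ℝ) : ℂ) * Complex.I *
        ((∑ i, (k i : ℝ) * θ i : ℝ) : ℂ))) ((Real.log (a θ) : ℂ))) :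
    ∃ C : (Fin ℓ → ℝ) → ℝ,
      Continuous C ∧ (∀ θ, 0 < C θ) ∧
      (∀ (θ : Fin ℓ → ℝ) (e : Fin ℓ → ℤ), C (θ + fun i => (e i : ℝ)) = C θ) ∧
      (∀ θ, (a θ : ℂ) = Complex.exp (c 0) * (C θ : ℂ) / (C (θ + ω) : ℂ)) :=
  stmt6_general ℓ ν τ M δ hν hδ ω hdio a hapos c hdecay hsum
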